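/- Let W be the probability simplex in ℝ^K, let x ↦ w*_ρ(x) denote the minimizer over W of w ↦ (1/2)‖∇F(x)w‖² + (ρ/2)‖w‖² with ρ > 0. Suppose at points x, y we have ‖∇F(x)ᵀ∇F(x) − ∇F(y)ᵀ∇F(y)‖ ≤ C. Then ‖w*_ρ(x) − w*_ρ(y)‖ ≤ C/ρ. -/
import Mathlib

open RealInnerProductSpace

/-- The probability simplex in `ℝ^K`. -/
def probSimplex (K : ℕ) : Set (EuclideanSpace ℝ (Fin K)) :=
  {w | (∀ i, 0 ≤ w i) ∧ ∑ i, w i = 1}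

lemma simplex_convex_pt {K : ℕ} {u v : EuclideanSpace ℝ (Fin K)}
    (hu : u ∈ probSimplex K) (hv : v ∈ probSimplex K) {t : ℝ} (ht0 : 0 ≤ t) (ht1 : t ≤ 1) :
    u + t • (v - u) ∈ probSimplex K := by
  obtain ⟨hu1, hu2⟩ := hu
  obtain ⟨hv1, hv2⟩ := hv
  constructor
  · intro i
    have : (u + t • (v - u)) i = (1 - t) * u i + t * v i := by
      simp [PiLp.add_apply, PiLp.smul_apply, PiLp.sub_apply, smul_eq_mul]; ring
    rw [this]
    have := hu1 i; have := hv1 i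
    nlinarith
  · have : ∀ i, (u + t • (v - u)) i = u i + t * (v i - u i) := by
      intro i; simp [PiLp.add_apply, PiLp.smul_apply, PiLp.sub_apply, smul_eq_mul]
    simp only [this]
    rw [Finset.sum_add_distrib, ← Finset.mul_sum, Finset.sum_sub_distrib, hu2, hv2]
    ring

lemma simplex_norm_le_one {K : ℕ} {u : EuclideanSpace ℝ (Fin K)} (hu : u ∈ probSimplex K) :
    ‖u‖ ≤ 1 := by
  obtain ⟨h1, h2⟩ := hu
  have hle : ∀ i, u i ≤ 1 := by
    intro i
    calc u i ≤ ∑ j, u j := Finset.single_le_sum (fun j _ => h1 j) (Finset.mem_univ i)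
    _ = 1 := h2
  have : ‖u‖ = Real.sqrt (∑ i, u i ^ 2) := by
    rw [EuclideanSpace.norm_eq]
    congr 1
    apply Finset.sum_congr rfl
    intro i _
    rw [Real.norm_eq_abs, sq_abs]
  rw [this]
  have hs : (∑ i, u i ^ 2) ≤ 1 := by
    calc ∑ i, u i ^ 2 ≤ ∑ i, u i := by
          apply Finset.sum_le_sum
          intro i _
          nlinarith [h1 i, hle i]
      _ = 1 := h2
  calc Real.sqrt (∑ i, u i ^ 2) ≤ Real.sqrt 1 := Real.sqrt_le_sqrt hs
    _ = 1 := Real.sqrt_one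

/-- Variational inequality at the constrained minimizer of the regularized quadratic. -/
lemma var_ineq {m K : ℕ}
    (A : EuclideanSpace ℝ (Fin K) →L[ℝ] EuclideanSpace ℝ (Fin m))
    (ρ : ℝ) (hρ : 0 < ρ)
    {wx w : EuclideanSpace ℝ (Fin K)}
    (hwx : wx ∈ probSimplex K) (hw : w ∈ probSimplex K)
    (hmin : ∀ v ∈ probSimplex K,
      (1/2) * ‖A wx‖^2 + (ρ/2) * ‖wx‖^2 ≤ (1/2) * ‖A v‖^2 + (ρ/2) * ‖v‖^2) :
    0 ≤ ⟪A wx, A (w - wx)⟫ + ρ * ⟪wx, w - wx⟫ := by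
  set d := w - wx with hd
  set g : ℝ := ⟪A wx, A d⟫ + ρ * ⟪wx, d⟫ with hg
  set q : ℝ := ‖A d‖^2 + ρ * ‖d‖^2 with hq
  have hqnn : 0 ≤ q := by positivity
  have key : ∀ t : ℝ, 0 < t → t ≤ 1 → 0 ≤ g + t / 2 * q := by
    intro t ht0 ht1
    have hmem := simplex_convex_pt hwx hw (le_of_lt ht0) ht1
    have hle := hmin _ hmem
    have h1 : ‖A (wx + t • d)‖^2 = ‖A wx‖^2 + 2 * (t * ⟪A wx, A d⟫) + t^2 * ‖A d‖^2 := by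
      rw [map_add, map_smul, norm_add_sq_real, inner_smul_right, norm_smul]
      rw [Real.norm_eq_abs, mul_pow, sq_abs]
    have h2 : ‖wx + t • d‖^2 = ‖wx‖^2 + 2 * (t * ⟪wx, d⟫) + t^2 * ‖d‖^2 := by
      rw [norm_add_sq_real, real_inner_smul_right, norm_smul]
      rw [Real.norm_eq_abs, mul_pow, sq_abs]
    rw [h1, h2] at hle
    have h3 : 0 ≤ t * g + t^2 / 2 * q := by
      simp only [hg, hq]; nlinarith
    nlinarith
  by_contra hneg
  push_neg at hneg
  rcases eq_or_lt_of_le hqnn with hq0 | hq0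
  · have := key 1 one_pos le_rfl
    rw [← hq0] at this
    linarith
  · have ht := key (min 1 (-g / q)) (lt_min one_pos (div_pos (neg_pos.mpr hneg) hq0)) (min_le_left _ _)
    have h4 : min 1 (-g / q) ≤ -g / q := min_le_right _ _
    have h5 : min 1 (-g / q) / 2 * q ≤ (-g / q) / 2 * q := by
      apply mul_le_mul_of_nonneg_right _ (le_of_lt hq0)
      linarith
    have h6 : (-g / q) / 2 * q = -g / 2 := by field_simp
    rw [h6] at h5
    linarith

/-- Lipschitz continuity of the regularized optimal weights.  If the Gram
operators at `x` and `y` differ by at most `C` in operator norm, then the minimizers of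
the corresponding `ρ`-strongly convex regularized objectives over the simplex satisfy
`‖w*_ρ(x) − w*_ρ(y)‖ ≤ C/ρ`. -/
theorem stmt14 {m K : ℕ}
    (A B : EuclideanSpace ℝ (Fin K) →L[ℝ] EuclideanSpace ℝ (Fin m))
    (ρ C : ℝ) (hρ : 0 < ρ) (hC : 0 ≤ C)
    (hgram : ‖(ContinuousLinearMap.adjoint A).comp A
      - (ContinuousLinearMap.adjoint B).comp B‖ ≤ C)
    (wx wy : EuclideanSpace ℝ (Fin K))
    (hwx : wx ∈ probSimplex K) (hwy : wy ∈ probSimplex K)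
    (hminx : ∀ w ∈ probSimplex K,
      (1/2) * ‖A wx‖^2 + (ρ/2) * ‖wx‖^2 ≤ (1/2) * ‖A w‖^2 + (ρ/2) * ‖w‖^2)
    (hminy : ∀ w ∈ probSimplex K,
      (1/2) * ‖B wy‖^2 + (ρ/2) * ‖wy‖^2 ≤ (1/2) * ‖B w‖^2 + (ρ/2) * ‖w‖^2) :
    ‖wx - wy‖ ≤ C / ρ := by
  set d := wx - wy with hd
  have hvx := var_ineq A ρ hρ hwx hwy hminx
  have hvy := var_ineq B ρ hρ hwy hwx hminy
  have hds : wy - wx = -d := by rw [hd]; abel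
  rw [hds] at hvx
  have hvx' : 0 ≤ -⟪A wx, A d⟫ - ρ * ⟪wx, d⟫ := by
    rw [map_neg, inner_neg_right, inner_neg_right] at hvx
    linarith
  have hvy' : 0 ≤ ⟪B wy, B d⟫ + ρ * ⟪wy, d⟫ := hvy
  -- strong convexity: ρ‖d‖² ≤ ⟪B wy, B d⟫ - ⟪A wx, A d⟫
  have hsc : ρ * ‖d‖^2 ≤ ⟪B wy, B d⟫ - ⟪A wx, A d⟫ := by
    have h1 : ⟪wx, d⟫ - ⟪wy, d⟫ = ‖d‖^2 := by
      rw [← inner_sub_left, ← hd, real_inner_self_eq_norm_sq]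
    nlinarith
  -- rewrite RHS using adjoint Gram operators
  set D := (ContinuousLinearMap.adjoint A).comp A - (ContinuousLinearMap.adjoint B).comp B with hD
  have hAA : ⟪A wy, A d⟫ = ⟪((ContinuousLinearMap.adjoint A).comp A) wy, d⟫ := by
    rw [ContinuousLinearMap.comp_apply, ContinuousLinearMap.adjoint_inner_left]
  have hBB : ⟪B wy, B d⟫ = ⟪((ContinuousLinearMap.adjoint B).comp B) wy, d⟫ := by
    rw [ContinuousLinearMap.comp_apply, ContinuousLinearMap.adjoint_inner_left]
  have hAd : 0 ≤ ⟪A d, A d⟫ := real_inner_self_nonneg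
  have hsplit : ⟪A wx, A d⟫ = ⟪A wy, A d⟫ + ⟪A d, A d⟫ := by
    rw [← inner_add_left, ← map_add]
    congr 2
    rw [hd]; abel
  have hbound : ⟪B wy, B d⟫ - ⟪A wy, A d⟫ ≤ C * ‖d‖ := by
    rw [hAA, hBB, ← inner_sub_left, ← ContinuousLinearMap.sub_apply]
    have h7 : -D = (ContinuousLinearMap.adjoint B).comp B - (ContinuousLinearMap.adjoint A).comp A := by
      rw [hD]; abel
    calc ⟪((ContinuousLinearMap.adjoint B).comp B - (ContinuousLinearMap.adjoint A).comp A) wy, d⟫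
        ≤ ‖((ContinuousLinearMap.adjoint B).comp B - (ContinuousLinearMap.adjoint A).comp A) wy‖ * ‖d‖ :=
          real_inner_le_norm _ _
      _ ≤ (‖(ContinuousLinearMap.adjoint B).comp B - (ContinuousLinearMap.adjoint A).comp A‖ * ‖wy‖) * ‖d‖ := by
          apply mul_le_mul_of_nonneg_right (ContinuousLinearMap.le_opNorm _ _) (norm_nonneg _)
      _ ≤ (C * 1) * ‖d‖ := by
          apply mul_le_mul_of_nonneg_right _ (norm_nonneg _)
          apply mul_le_mul _ (simplex_norm_le_one hwy) (norm_nonneg _) hC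
          rw [← h7, norm_neg]; exact hgram
      _ = C * ‖d‖ := by ring
  have hfinal : ρ * ‖d‖^2 ≤ C * ‖d‖ := by
    calc ρ * ‖d‖^2 ≤ ⟪B wy, B d⟫ - ⟪A wx, A d⟫ := hsc
      _ = (⟪B wy, B d⟫ - ⟪A wy, A d⟫) - ⟪A d, A d⟫ := by rw [hsplit]; ring
      _ ≤ C * ‖d‖ := by linarith
  rcases eq_or_lt_of_le (norm_nonneg d) with h0 | h0
  · rw [← h0]; positivity
  · rw [le_div_iff₀ hρ]
    nlinarith
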